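/- arXiv:2012.04730 — 5 statements merged into one kernel-verified Lean document; each statement's English description precedes it below -/
import Mathlib

section
/- The pointwise minimum μ(X) = min over all QZC rank functions r of r(X) is itself a QZC rank function, and hence is the unique minimum QZC rank function under the pointwise partial order. -/
open scoped BigOperators

/-- An order-`N` real tensor with mode sizes `I n`. -/
abbrev Tensor (N : ℕ) (I : Fin N → ℕ) : Type :=
  ((n : Fin N) → Fin (I n)) → ℝ

/-- A rank-one tensor is an outer product of nonzero vectors. -/
def IsRankOne {N : ℕ} {I : Fin N → ℕ} (X : Tensor N I) : Prop :=
  ∃ a : (n : Fin N) → Fin (I n) → ℝ, (∀ n, a n ≠ 0) ∧ ∀ i, X i = ∏ n, a n (i n)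

/-- The order-`N` identity tensor `I_{M,N}`: ones on the diagonal, zeros elsewhere. -/
def idTensor (M N : ℕ) : Tensor N (fun _ => M) :=
  fun i => if ∀ n m : Fin N, i n = i m then 1 else 0

/-- The matrix associated to a tensor of shape `I₁ × I₂ × 1 × ⋯ × 1`. -/
def assocMatrix {N : ℕ} {I : Fin N → ℕ} (h2 : 2 ≤ N)
    (h1 : ∀ n : Fin N, 2 ≤ n.val → I n = 1) (X : Tensor N I) :
    Matrix (Fin (I ⟨0, by omega⟩)) (Fin (I ⟨1, by omega⟩)) ℝ :=
  Matrix.of fun p q =>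
    X (fun m =>
      if e0 : m = ⟨0, by omega⟩ then Fin.cast (congrArg I e0.symm) p
      else if e1 : m = ⟨1, by omega⟩ then Fin.cast (congrArg I e1.symm) q
      else Fin.cast (h1 m (by
        have v0 : m.val ≠ 0 := fun hh => e0 (Fin.ext hh)
        have v1 : m.val ≠ 1 := fun hh => e1 (Fin.ext hh)
        omega)).symm 0)

/-- Permutation of the modes of a tensor. -/
def permute {N : ℕ} (I : Fin N → ℕ) (π : Equiv.Perm (Fin N)) (X : Tensor N I) :
    Tensor N (fun m => I (π m)) :=
  fun i => X (fun m => Fin.cast (congrArg I (π.apply_symm_apply m)) (i (π.symm m)))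

/-- `Y` is a subtensor of `X` : it is obtained by selecting, in each mode, an
increasing subset of the indices. -/
def IsSubtensor {N : ℕ} {J I : Fin N → ℕ} (Y : Tensor N J) (X : Tensor N I) : Prop :=
  ∃ f : (n : Fin N) → Fin (J n) → Fin (I n),
    (∀ n, StrictMono (f n)) ∧ ∀ i, Y i = X (fun n => f n (i n))

/-- The mode-`n` unfolding of a tensor, as a matrix whose columns are the
mode-`n` fibers. -/
def modeUnfold {N : ℕ} {I : Fin N → ℕ} (X : Tensor N I) (n : Fin N) :
    Matrix (Fin (I n)) ((m : {m : Fin N // m ≠ n}) → Fin (I m.1)) ℝ :=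
  Matrix.of fun p j =>
    X (fun m => if h : m = n then Fin.cast (congrArg I h.symm) p else j ⟨m, h⟩)

/-- The mode-`n` matrix product `X ×ₙ A`. -/
def modeMul {N : ℕ} {I : Fin N → ℕ} (X : Tensor N I) (n : Fin N) {J : ℕ}
    (A : Matrix (Fin J) (Fin (I n)) ℝ) : Tensor N (Function.update I n J) :=
  fun i => ∑ t : Fin (I n),
    A (Fin.cast (by simp) (i n)) t *
      X (fun m =>
        if h : m = n then Fin.cast (congrArg I h.symm) t
        else Fin.cast (by rw [Function.update_of_ne h]) (i m))

/-- Appending a trailing mode of dimension 1 to a tensor. -/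
def snocOne {N : ℕ} {I : Fin N → ℕ} (X : Tensor N I) :
    Tensor (N + 1) (Fin.snoc I 1) :=
  fun i => X (fun m => Fin.cast (by simp) (i m.castSucc))

/-- The matrix associated to a tensor all of whose modes other than `n₁, n₂`
have dimension 1 (a "submatrix" shape). -/
def twoModeMatrix {N : ℕ} {J : Fin N → ℕ} (Z : Tensor N J) (n₁ n₂ : Fin N)
    (h1 : ∀ m, m ≠ n₁ → m ≠ n₂ → J m = 1) : Matrix (Fin (J n₁)) (Fin (J n₂)) ℝ :=
  Matrix.of fun p q =>
    Z (fun m =>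
      if h : m = n₁ then Fin.cast (congrArg J h.symm) p
      else if h' : m = n₂ then Fin.cast (congrArg J h'.symm) q
      else Fin.cast (h1 m h h').symm 0)

/-- A rank function assigns a natural number to every real tensor. -/
def RankFun : Type :=
  ∀ (N : ℕ) (I : Fin N → ℕ), Tensor N I → ℕ

/-- The axioms (QZC1)–(QZC6) of Qi, Zhang and Chen for a tensor rank function. -/
structure IsQZCRankFn (r : RankFun) : Prop where
  zero_iff : ∀ (N : ℕ), 0 < N → ∀ (I : Fin N → ℕ) (X : Tensor N I),
    r N I X = 0 ↔ X = 0
  one_iff : ∀ (N : ℕ), 0 < N → ∀ (I : Fin N → ℕ) (X : Tensor N I),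
    r N I X = 1 ↔ IsRankOne X
  id_eq : ∀ (M N : ℕ), 2 ≤ N → r N (fun _ => M) (idTensor M N) = M
  matrix_eq : ∀ (N : ℕ) (h2 : 2 ≤ N) (I : Fin N → ℕ)
    (h1 : ∀ n : Fin N, 2 ≤ n.val → I n = 1) (X : Tensor N I),
    r N I X = (assocMatrix h2 h1 X).rank
  smul_eq : ∀ (N : ℕ), 0 < N → ∀ (I : Fin N → ℕ) (α : ℝ), α ≠ 0 →
    ∀ (X : Tensor N I), r N I (α • X) = r N I X
  perm_eq : ∀ (N : ℕ), 0 < N → ∀ (I : Fin N → ℕ) (π : Equiv.Perm (Fin N))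
    (X : Tensor N I), r N (fun m => I (π m)) (permute I π X) = r N I X
  subtensor_le : ∀ (N : ℕ), 0 < N → ∀ (I J : Fin N → ℕ) (X : Tensor N I)
    (Y : Tensor N J), IsSubtensor Y X → r N J Y ≤ r N I X

/-- The pointwise minimum of all QZC rank functions. -/
noncomputable def muRank : RankFun := fun N I X =>
  sInf {k | ∃ r : RankFun, IsQZCRankFn r ∧ r N I X = k}

/-! The multilinear rank gives a QZC rank function, `X ↦ maxₙ rank X₍ₙ₎`, so the set whose
infimum defines `μ(X)` is nonempty and the infimum is attained by some QZC rank function.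
Each axiom constrains either a single value (and then transfers from a function attaining
the minimum) or compares two values in a way every QZC rank function does (and then passes
to the minimum). For the multilinear rank the only substantial axiom is the rank-one one: when
every unfolding has rank at most one, its vanishing `2 × 2` minors let one exchange mode
indices between entries, which yields `X i * X i₀ ^ N = X i₀ * ∏ₙ X (i₀ with mode n set to iₙ)`
and hence a factorisation of `X` as an outer product. -/

namespace Matrix

variable {K m n : Type*} [Field K] [Fintype n]

theorem rank_eq_zero_iff (A : Matrix m n K) : A.rank = 0 ↔ A = 0 := by
  classical
  rw [rank, Submodule.finrank_eq_zero, LinearMap.range_eq_bot, ← Matrix.toLin'_apply',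
    LinearEquiv.map_eq_zero_iff]

theorem one_le_rank_iff (A : Matrix m n K) : 1 ≤ A.rank ↔ A ≠ 0 := by
  rw [Nat.one_le_iff_ne_zero, Ne, rank_eq_zero_iff]

theorem mul_eq_mul_of_rank_le_one {A : Matrix m n K} (hA : A.rank ≤ 1) (i i' : m) (j j' : n) :
    A i j * A i' j' = A i j' * A i' j := by
  have hdet : (A.submatrix ![i, i'] ![j, j']).det = 0 := by
    by_contra hB
    have := (rank_of_det_ne_zero hB).symm.trans_le ((rank_submatrix_le A _ _).trans hA)
    simp at this
  rw [det_fin_two, sub_eq_zero] at hdet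
  simpa using hdet

end Matrix

section Unfolding

variable {N : ℕ} {I : Fin N → ℕ}

theorem modeUnfold_apply_update (X : Tensor N I) (n : Fin N) (i : (m : Fin N) → Fin (I m))
    (p : Fin (I n)) : modeUnfold X n p (fun m => i m.1) = X (Function.update i n p) := by
  simp only [modeUnfold, Matrix.of_apply]
  congr 1
  funext m
  by_cases h : m = n
  · subst h
    simp
  · simp [h]

theorem modeUnfold_apply_self (X : Tensor N I) (n : Fin N) (i : (m : Fin N) → Fin (I m)) :
    modeUnfold X n (i n) (fun m => i m.1) = X i := by
  rw [modeUnfold_apply_update, Function.update_eq_self]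

theorem modeUnfold_eq_zero_iff {X : Tensor N I} (n : Fin N) : modeUnfold X n = 0 ↔ X = 0 := by
  refine ⟨fun h => funext fun i => ?_, fun h => by subst h; rfl⟩
  rw [← modeUnfold_apply_self X n i, h]
  rfl

theorem modeUnfold_smul (α : ℝ) (X : Tensor N I) (n : Fin N) :
    modeUnfold (α • X) n = α • modeUnfold X n :=
  rfl

theorem rank_modeUnfold_le_of_isSubtensor {J : Fin N → ℕ} {X : Tensor N I} {Y : Tensor N J}
    (h : IsSubtensor Y X) (n : Fin N) :
    (modeUnfold Y n).rank ≤ (modeUnfold X n).rank := by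
  obtain ⟨f, -, hYX⟩ := h
  have hY : modeUnfold Y n =
      (modeUnfold X n).submatrix (f n) (fun j m => f m.1 (j m)) := by
    ext p j
    simp only [modeUnfold, Matrix.of_apply, Matrix.submatrix_apply, hYX]
    congr 1
    funext m
    by_cases h : m = n
    · subst h
      simp
    · simp [h]
  rw [hY]
  exact Matrix.rank_submatrix_le _ _ _

theorem rank_modeUnfold_le_of_eq_one (X : Tensor N I) {m : Fin N} (hm : I m = 1) (n : Fin N) :
    (modeUnfold X m).rank ≤ (modeUnfold X n).rank := by
  by_cases hX : X = 0
  · simp [(modeUnfold_eq_zero_iff m).2 hX, (modeUnfold_eq_zero_iff n).2 hX]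
  · calc (modeUnfold X m).rank ≤ 1 := by
          simpa [hm] using Matrix.rank_le_card_height (modeUnfold X m)
      _ ≤ (modeUnfold X n).rank :=
          (Matrix.one_le_rank_iff _).2 ((modeUnfold_eq_zero_iff n).not.2 hX)

end Unfolding

section Permute

variable {N : ℕ} {I : Fin N → ℕ}

theorem rank_modeUnfold_permute (π : Equiv.Perm (Fin N)) (X : Tensor N I) (n : Fin N) :
    (modeUnfold (permute I π X) n).rank = (modeUnfold X (π n)).rank := by
  let e : {m // m ≠ n} ≃ {k // k ≠ π n} := π.subtypeEquiv fun m => π.injective.ne_iff.symm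
  let E : ((k : {k // k ≠ π n}) → Fin (I k.1)) ≃ ((m : {m // m ≠ n}) → Fin (I (π m.1))) :=
    Equiv.piCongrLeft' (fun k => Fin (I k.1)) e.symm
  have h : modeUnfold X (π n) = (modeUnfold (permute I π X) n).submatrix (Equiv.refl _) E := by
    ext p j
    simp only [modeUnfold, permute, Matrix.of_apply, Matrix.submatrix_apply]
    congr 1
    funext k
    by_cases hk : k = π n
    · subst hk
      simp
    · have hk' : π.symm k ≠ n := fun h => hk (by rw [← h, Equiv.apply_symm_apply])
      rw [dif_neg hk, dif_neg hk']
      exact Fin.ext (congrArg (fun a => (j a).val) (Subtype.ext (π.apply_symm_apply k).symm))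
  rw [h, Matrix.rank_submatrix]

end Permute

section RankOne

variable {N : ℕ} {I : Fin N → ℕ}

theorem IsRankOne.ne_zero {X : Tensor N I} (hX : IsRankOne X) : X ≠ 0 := by
  obtain ⟨a, ha, hXa⟩ := hX
  choose q hq using fun n => Function.ne_iff.1 (ha n)
  intro h0
  have := hXa q
  rw [h0] at this
  exact Finset.prod_ne_zero_iff.2 (fun n _ => hq n) this.symm

theorem rank_modeUnfold_of_isRankOne {X : Tensor N I} (hX : IsRankOne X) (n : Fin N) :
    (modeUnfold X n).rank = 1 := by
  obtain ⟨a, -, hXa⟩ := id hX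
  have hU : modeUnfold X n = Matrix.vecMulVec (a n) fun j => ∏ m, a m.1 (j m) := by
    ext p j
    rw [modeUnfold, Matrix.of_apply, hXa, Matrix.vecMulVec_apply,
      Fintype.prod_eq_mul_prod_subtype_ne _ n, dif_pos rfl]
    exact congrArg _ (Finset.prod_congr rfl fun m _ => by rw [dif_neg m.2])
  refine le_antisymm (hU ▸ Matrix.rank_vecMulVec_le _ _) ?_
  exact (Matrix.one_le_rank_iff _).2 ((modeUnfold_eq_zero_iff n).not.2 hX.ne_zero)

theorem mul_eq_mul_update_of_rank_modeUnfold_le_one {X : Tensor N I} {n : Fin N}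
    (h : (modeUnfold X n).rank ≤ 1) (u v : (m : Fin N) → Fin (I m)) :
    X u * X v = X (Function.update u n (v n)) * X (Function.update v n (u n)) := by
  have := Matrix.mul_eq_mul_of_rank_le_one h (u n) (v n) (fun m => u m.1) (fun m => v m.1)
  rw [modeUnfold_apply_self, modeUnfold_apply_self, modeUnfold_apply_update,
    modeUnfold_apply_update] at this
  rw [this, mul_comm]

/-- Moving from `i₀` towards `i` one mode at a time, each step is an exchange of mode indices. -/
theorem mul_pow_card_eq_mul_prod_update {X : Tensor N I} (h : ∀ n, (modeUnfold X n).rank ≤ 1)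
    (i i₀ : (n : Fin N) → Fin (I n)) (S : Finset (Fin N)) :
    X (S.piecewise i i₀) * X i₀ ^ S.card = X i₀ * ∏ n ∈ S, X (Function.update i₀ n (i n)) := by
  induction S using Finset.induction_on with
  | empty => simp
  | @insert a S ha ih =>
    have hex := mul_eq_mul_update_of_rank_modeUnfold_le_one (h a) (S.piecewise i i₀)
      (Function.update i₀ a (i a))
    rw [Function.update_self, Function.update_idem, Finset.piecewise_eq_of_notMem _ _ _ ha,
      Function.update_eq_self] at hex
    rw [Finset.piecewise_insert, Finset.card_insert_of_notMem ha, Finset.prod_insert ha]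
    calc X (Function.update (S.piecewise i i₀) a (i a)) * X i₀ ^ (S.card + 1)
        = X (S.piecewise i i₀) * X (Function.update i₀ a (i a)) * X i₀ ^ S.card := by
          rw [hex]; ring
      _ = X i₀ * (X (Function.update i₀ a (i a)) * ∏ n ∈ S, X (Function.update i₀ n (i n))) := by
          rw [mul_right_comm, ih]; ring

theorem isRankOne_of_rank_modeUnfold_le_one {X : Tensor N I} (hN : 0 < N) (hX : X ≠ 0)
    (h : ∀ n, (modeUnfold X n).rank ≤ 1) : IsRankOne X := by
  obtain ⟨i₀, hi₀⟩ := Function.ne_iff.1 hX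
  let n₀ : Fin N := ⟨0, hN⟩
  let c := X i₀ / X i₀ ^ N
  refine ⟨fun n p => (if n = n₀ then c else 1) * X (Function.update i₀ n p), fun n hn => ?_,
    fun i => ?_⟩
  · have := congrFun hn (i₀ n)
    simp only [Function.update_eq_self, Pi.zero_apply, mul_eq_zero] at this
    split_ifs at this <;> simp_all [c]
  · have key := mul_pow_card_eq_mul_prod_update h i i₀ Finset.univ
    rw [Finset.piecewise_univ, Finset.card_univ, Fintype.card_fin] at key
    rw [Finset.prod_mul_distrib, Finset.prod_ite_eq' Finset.univ n₀, if_pos (Finset.mem_univ _),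
      div_mul_eq_mul_div, ← key, mul_div_cancel_right₀ _ (pow_ne_zero _ hi₀)]

end RankOne

theorem modeUnfold_idTensor_apply {M N : ℕ} (hN : 2 ≤ N) (n : Fin N) (p q : Fin M) :
    modeUnfold (idTensor M N) n p (fun _ => q) = if p = q then 1 else 0 := by
  have : Nontrivial (Fin N) := Fin.nontrivial_iff_two_le.2 hN
  obtain ⟨m, hm⟩ := exists_ne n
  simp only [modeUnfold, idTensor, Matrix.of_apply]
  congr 1
  refine propext ⟨fun hall => ?_, fun hpq a b => ?_⟩
  · simpa [hm] using hall n m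
  · subst hpq
    by_cases ha : a = n <;> by_cases hb : b = n <;> simp [ha, hb]

theorem rank_modeUnfold_idTensor {M N : ℕ} (hN : 2 ≤ N) (n : Fin N) :
    (modeUnfold (idTensor M N) n).rank = M := by
  refine le_antisymm (by simpa using Matrix.rank_le_card_height (modeUnfold (idTensor M N) n)) ?_
  have hsub : (modeUnfold (idTensor M N) n).submatrix id (fun q _ => q) = 1 := by
    ext p q
    rw [Matrix.submatrix_apply, id, modeUnfold_idTensor_apply hN, Matrix.one_apply]
  calc M = (1 : Matrix (Fin M) (Fin M) ℝ).rank := by simp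
    _ ≤ (modeUnfold (idTensor M N) n).rank := hsub ▸ Matrix.rank_submatrix_le _ _ _

section TwoMode

variable {N : ℕ} {I : Fin N → ℕ} {n₁ n₂ : Fin N}

def twoModeColEquiv (h₁₂ : n₁ ≠ n₂) (h1 : ∀ m, m ≠ n₁ → m ≠ n₂ → I m = 1) :
    Fin (I n₂) ≃ ((m : {m : Fin N // m ≠ n₁}) → Fin (I m.1)) where
  toFun q m :=
    if h : m.1 = n₂ then Fin.cast (congrArg I h.symm) q else Fin.cast (h1 m.1 m.2 h).symm 0
  invFun j := j ⟨n₂, h₁₂.symm⟩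
  left_inv q := by simp
  right_inv j := by
    funext m
    by_cases h : m.1 = n₂
    · obtain rfl : m = ⟨n₂, h₁₂.symm⟩ := Subtype.ext h
      simp
    · have := (j m).isLt
      have := h1 m.1 m.2 h
      dsimp only
      rw [dif_neg h]
      ext
      simp only [Fin.val_cast, Fin.val_zero]
      omega

theorem rank_modeUnfold_eq_rank_twoModeMatrix (X : Tensor N I) (h₁₂ : n₁ ≠ n₂)
    (h1 : ∀ m, m ≠ n₁ → m ≠ n₂ → I m = 1) :
    (modeUnfold X n₁).rank = (twoModeMatrix X n₁ n₂ h1).rank := by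
  have h : twoModeMatrix X n₁ n₂ h1 =
      (modeUnfold X n₁).submatrix (Equiv.refl _) (twoModeColEquiv h₁₂ h1) := by
    ext p q
    simp only [twoModeMatrix, modeUnfold, twoModeColEquiv, Matrix.of_apply,
      Matrix.submatrix_apply, Equiv.coe_fn_mk, Equiv.refl_apply]
  rw [h, Matrix.rank_submatrix]

theorem twoModeMatrix_swap (X : Tensor N I) (h₁₂ : n₁ ≠ n₂)
    (h1 : ∀ m, m ≠ n₁ → m ≠ n₂ → I m = 1) :
    twoModeMatrix X n₂ n₁ (fun m h h' => h1 m h' h) = (twoModeMatrix X n₁ n₂ h1).transpose := by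
  ext q p
  simp only [twoModeMatrix, Matrix.transpose_apply, Matrix.of_apply]
  congr 1
  funext m
  by_cases h : m = n₁
  · subst h
    simp [h₁₂]
  · by_cases h' : m = n₂
    · subst h'
      simp [h]
    · simp [h, h']

end TwoMode

/-- The largest entry of the multilinear rank `(rank X₍₁₎, …, rank X₍N₎)`. -/
noncomputable def maxUnfoldRank : RankFun := fun N _ X =>
  Finset.univ.sup fun n : Fin N => (modeUnfold X n).rank

section MaxUnfoldRank

variable {N : ℕ} {I : Fin N → ℕ}

theorem rank_modeUnfold_le_maxUnfoldRank (X : Tensor N I) (n : Fin N) :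
    (modeUnfold X n).rank ≤ maxUnfoldRank N I X :=
  Finset.le_sup (f := fun n => (modeUnfold X n).rank) (Finset.mem_univ n)

theorem maxUnfoldRank_le_iff {X : Tensor N I} {k : ℕ} :
    maxUnfoldRank N I X ≤ k ↔ ∀ n, (modeUnfold X n).rank ≤ k :=
  Finset.sup_le_iff.trans (by simp)

theorem maxUnfoldRank_eq_of_forall_le {X : Tensor N I} {n : Fin N}
    (h : ∀ m, (modeUnfold X m).rank ≤ (modeUnfold X n).rank) :
    maxUnfoldRank N I X = (modeUnfold X n).rank :=
  le_antisymm (maxUnfoldRank_le_iff.2 h) (rank_modeUnfold_le_maxUnfoldRank X n)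

theorem maxUnfoldRank_eq_of_forall_eq (hN : 0 < N) {X : Tensor N I} {k : ℕ}
    (h : ∀ n, (modeUnfold X n).rank = k) : maxUnfoldRank N I X = k :=
  (maxUnfoldRank_eq_of_forall_le (n := ⟨0, hN⟩) fun m => by rw [h, h]).trans (h _)

theorem maxUnfoldRank_eq_zero_iff (hN : 0 < N) {X : Tensor N I} :
    maxUnfoldRank N I X = 0 ↔ X = 0 := by
  rw [← Nat.le_zero, maxUnfoldRank_le_iff]
  simp only [Nat.le_zero, Matrix.rank_eq_zero_iff, modeUnfold_eq_zero_iff]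
  exact ⟨fun h => h ⟨0, hN⟩, fun h _ => h⟩

theorem maxUnfoldRank_eq_one_iff (hN : 0 < N) {X : Tensor N I} :
    maxUnfoldRank N I X = 1 ↔ IsRankOne X := by
  refine ⟨fun h => ?_, fun hX => ?_⟩
  · have hX : X ≠ 0 := fun h0 => by simp [(maxUnfoldRank_eq_zero_iff hN).2 h0] at h
    exact isRankOne_of_rank_modeUnfold_le_one hN hX (maxUnfoldRank_le_iff.1 h.le)
  · exact maxUnfoldRank_eq_of_forall_eq hN (rank_modeUnfold_of_isRankOne hX)

theorem maxUnfoldRank_idTensor {M N : ℕ} (hN : 2 ≤ N) :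
    maxUnfoldRank N (fun _ => M) (idTensor M N) = M :=
  maxUnfoldRank_eq_of_forall_eq (by omega) (rank_modeUnfold_idTensor hN)

/-- For a tensor of shape `I₀ × I₁ × 1 × ⋯ × 1`, the mode-0 and mode-1 unfoldings are the
associated matrix and its transpose, up to reindexing columns. -/
theorem maxUnfoldRank_eq_rank_assocMatrix (h2 : 2 ≤ N) (h1 : ∀ n : Fin N, 2 ≤ n.val → I n = 1)
    (X : Tensor N I) : maxUnfoldRank N I X = (assocMatrix h2 h1 X).rank := by
  let n₀ : Fin N := ⟨0, by omega⟩
  let n₁ : Fin N := ⟨1, by omega⟩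
  have h₀₁ : n₀ ≠ n₁ := by simp [n₀, n₁, Fin.ext_iff]
  have h1' : ∀ m, m ≠ n₀ → m ≠ n₁ → I m = 1 := fun m h h' =>
    h1 m (by simp only [n₀, n₁, ne_eq, Fin.ext_iff] at h h'; omega)
  have hn₀ : (modeUnfold X n₀).rank = (assocMatrix h2 h1 X).rank :=
    rank_modeUnfold_eq_rank_twoModeMatrix X h₀₁ h1'
  have hn₁ : (modeUnfold X n₁).rank = (assocMatrix h2 h1 X).rank := by
    rw [rank_modeUnfold_eq_rank_twoModeMatrix X h₀₁.symm fun m h h' => h1' m h' h,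
      twoModeMatrix_swap X h₀₁ h1', Matrix.rank_transpose]
    rfl
  rw [← hn₀]
  refine maxUnfoldRank_eq_of_forall_le fun m => ?_
  by_cases hm₀ : m = n₀
  · rw [hm₀]
  by_cases hm₁ : m = n₁
  · rw [hm₁, hn₁, hn₀]
  exact rank_modeUnfold_le_of_eq_one X (h1' m hm₀ hm₁) n₀

theorem maxUnfoldRank_smul {α : ℝ} (hα : α ≠ 0) (X : Tensor N I) :
    maxUnfoldRank N I (α • X) = maxUnfoldRank N I X := by
  simp only [maxUnfoldRank, modeUnfold_smul,
    Matrix.rank_smul_of_mem_nonZeroDivisors _ (mem_nonZeroDivisors_of_ne_zero hα)]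

theorem maxUnfoldRank_permute (π : Equiv.Perm (Fin N)) (X : Tensor N I) :
    maxUnfoldRank N (fun m => I (π m)) (permute I π X) = maxUnfoldRank N I X := by
  simp only [maxUnfoldRank, rank_modeUnfold_permute]
  conv_rhs => rw [← Finset.univ_map_equiv_to_embedding π, Finset.sup_map]
  rfl

theorem maxUnfoldRank_le_of_isSubtensor {J : Fin N → ℕ} {X : Tensor N I} {Y : Tensor N J}
    (h : IsSubtensor Y X) : maxUnfoldRank N J Y ≤ maxUnfoldRank N I X :=
  maxUnfoldRank_le_iff.2 fun n =>
    (rank_modeUnfold_le_of_isSubtensor h n).trans (rank_modeUnfold_le_maxUnfoldRank X n)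

end MaxUnfoldRank

theorem isQZCRankFn_maxUnfoldRank : IsQZCRankFn maxUnfoldRank where
  zero_iff _ hN _ _ := maxUnfoldRank_eq_zero_iff hN
  one_iff _ hN _ _ := maxUnfoldRank_eq_one_iff hN
  id_eq _ _ hN := maxUnfoldRank_idTensor hN
  matrix_eq _ h2 _ h1 X := maxUnfoldRank_eq_rank_assocMatrix h2 h1 X
  smul_eq _ _ _ _ hα X := maxUnfoldRank_smul hα X
  perm_eq _ _ _ π X := maxUnfoldRank_permute π X
  subtensor_le _ _ _ _ _ _ h := maxUnfoldRank_le_of_isSubtensor h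

theorem muRank_le (r : RankFun) (hr : IsQZCRankFn r) (N : ℕ) (I : Fin N → ℕ) (X : Tensor N I) :
    muRank N I X ≤ r N I X :=
  Nat.sInf_le ⟨r, hr, rfl⟩

theorem exists_isQZCRankFn_eq_muRank (N : ℕ) (I : Fin N → ℕ) (X : Tensor N I) :
    ∃ r, IsQZCRankFn r ∧ r N I X = muRank N I X :=
  Nat.sInf_mem (s := {k | ∃ r, IsQZCRankFn r ∧ r N I X = k})
    ⟨_, maxUnfoldRank, isQZCRankFn_maxUnfoldRank, rfl⟩

theorem muRank_le_muRank {N N' : ℕ} {I : Fin N → ℕ} {I' : Fin N' → ℕ} {X : Tensor N I}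
    {Y : Tensor N' I'} (h : ∀ r, IsQZCRankFn r → r N' I' Y ≤ r N I X) :
    muRank N' I' Y ≤ muRank N I X := by
  obtain ⟨r, hr, hrX⟩ := exists_isQZCRankFn_eq_muRank N I X
  exact (muRank_le r hr N' I' Y).trans (hrX ▸ h r hr)

theorem isQZCRankFn_muRank : IsQZCRankFn muRank where
  zero_iff N hN I X := by
    obtain ⟨r, hr, hrX⟩ := exists_isQZCRankFn_eq_muRank N I X
    exact hrX ▸ hr.zero_iff N hN I X
  one_iff N hN I X := by
    obtain ⟨r, hr, hrX⟩ := exists_isQZCRankFn_eq_muRank N I X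
    exact hrX ▸ hr.one_iff N hN I X
  id_eq M N hN := by
    obtain ⟨r, hr, hrX⟩ := exists_isQZCRankFn_eq_muRank N _ (idTensor M N)
    exact hrX ▸ hr.id_eq M N hN
  matrix_eq N h2 I h1 X := by
    obtain ⟨r, hr, hrX⟩ := exists_isQZCRankFn_eq_muRank N I X
    exact hrX ▸ hr.matrix_eq N h2 I h1 X
  smul_eq N hN I α hα X :=
    le_antisymm (muRank_le_muRank fun r hr => (hr.smul_eq N hN I α hα X).le)
      (muRank_le_muRank fun r hr => (hr.smul_eq N hN I α hα X).ge)
  perm_eq N hN I π X :=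
    le_antisymm (muRank_le_muRank fun r hr => (hr.perm_eq N hN I π X).le)
      (muRank_le_muRank fun r hr => (hr.perm_eq N hN I π X).ge)
  subtensor_le N hN I J X Y h := muRank_le_muRank fun r hr => hr.subtensor_le N hN I J X Y h

/-- The pointwise minimum `μ` over all QZC rank functions is itself a QZC rank
function, hence the unique minimum QZC rank function for the pointwise order. -/
theorem muRank_isQZC_and_minimum :
    IsQZCRankFn muRank ∧
    (∀ r : RankFun, IsQZCRankFn r →
      ∀ (N : ℕ) (I : Fin N → ℕ) (X : Tensor N I), muRank N I X ≤ r N I X) ∧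
    (∀ m : RankFun, IsQZCRankFn m →
      (∀ r : RankFun, IsQZCRankFn r →
        ∀ (N : ℕ) (I : Fin N → ℕ) (X : Tensor N I), m N I X ≤ r N I X) →
      m = muRank) :=
  ⟨isQZCRankFn_muRank, muRank_le, fun m hm hmin => funext fun N => funext fun I => funext fun X =>
    le_antisymm (hmin muRank isQZCRankFn_muRank N I X) (muRank_le m hm N I X)⟩
end

section
/- Let X ∈ ℝ^{I₁×⋯×I_N} be nonzero and let R = rank(X_(n)). If j₁ < ⋯ < j_R index R linearly independent rows of the mode-n unfolding X_(n), and A ∈ ℝ^{R×I_n} is the selection matrix with a_{st} = 1 if t = j_s and 0 otherwise, then Y = X ×_n A is a subtensor of X satisfying rank(Y_(m)) = rank(X_(m)) for all modes m with 1 ≤ m ≤ N. -/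
open scoped BigOperators

/-!
Let `A` select the rows `f` of `X₍ₙ₎` and `Y = X ×ₙ A`. Since these rows span the row space of
`X₍ₙ₎`, there is `C` with `C A X₍ₙ₎ = X₍ₙ₎`, so that `X = Y ×ₙ C` up to the identification of the
shapes. A mode-`n` product never increases an unfolding rank: it multiplies `X₍ₙ₎` on the left by
the factor and, for `m ≠ n`, it multiplies `X₍ₘ₎` on the right by some matrix. Hence
`rank Y₍ₘ₎ ≤ rank X₍ₘ₎ ≤ rank Y₍ₘ₎` for every mode `m`.
-/

namespace Matrix

theorem exists_mul_submatrix_eq_of_linearIndependent {K α β ι : Type*} [Field K] [Fintype α]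
    [Fintype β] [Fintype ι] (M : Matrix α β K) (f : ι → α)
    (hind : LinearIndependent K fun i => M (f i)) (hcard : Fintype.card ι = M.rank) :
    ∃ C : Matrix α ι K, C * M.submatrix f id = M := by
  have hspan : Submodule.span K (Set.range fun i => M (f i)) = Submodule.span K (Set.range M) :=
    Submodule.eq_of_le_of_finrank_le (Submodule.span_mono (Set.range_comp_subset_range f M))
      (by rw [finrank_span_eq_card hind, hcard, rank_eq_finrank_span_row]; rfl)
  have hrow : ∀ a, ∃ c : ι → K, ∑ i, c i • M (f i) = M a := fun a =>
    Submodule.mem_span_range_iff_exists_fun K |>.mp (hspan ▸ Submodule.subset_span ⟨a, rfl⟩)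
  choose C hC using hrow
  refine ⟨of C, ext fun a b => ?_⟩
  simpa [mul_apply] using congrFun (hC a) b

theorem of_ite_eq_one_mul {R α β γ : Type*} [NonAssocSemiring R] [Fintype β] [DecidableEq β]
    (f : α → β) (M : Matrix β γ R) :
    (of fun a b => if b = f a then (1 : R) else 0) * M = M.submatrix f id := by
  ext a c
  simp [mul_apply]

end Matrix

section ModeProduct

open Matrix Function

variable {N : ℕ} {I : Fin N → ℕ}

theorem modeUnfold_apply (X : Tensor N I) (n : Fin N) (p : Fin (I n))
    (j : (m : {m : Fin N // m ≠ n}) → Fin (I m.1)) :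
    modeUnfold X n p j =
      X (fun m => if h : m = n then Fin.cast (congrArg I h.symm) p else j ⟨m, h⟩) := rfl

theorem modeMul_apply (X : Tensor N I) (n : Fin N) {J : ℕ} (A : Matrix (Fin J) (Fin (I n)) ℝ)
    (i : (m : Fin N) → Fin (update I n J m)) :
    modeMul X n A i = (A * modeUnfold X n) (Fin.cast (update_self n J I) (i n))
      (fun m => Fin.cast (update_of_ne m.2 J I) (i m)) := rfl

theorem modeUnfold_modeMul_self (X : Tensor N I) (n : Fin N) {J : ℕ}
    (A : Matrix (Fin J) (Fin (I n)) ℝ) :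
    modeUnfold (modeMul X n A) n = (A * modeUnfold X n).submatrix
      (Fin.cast (update_self n J I)) (fun j m => Fin.cast (update_of_ne m.2 J I) (j m)) := by
  ext p j
  rw [modeUnfold_apply, modeMul_apply, submatrix_apply, dif_pos rfl]
  exact congrArg (fun k => (A * modeUnfold X n) (Fin.cast (update_self n J I) p) k)
    (funext fun m => by rw [dif_neg m.2])

theorem exists_modeUnfold_modeMul_eq_mul (X : Tensor N I) (n : Fin N) {J : ℕ}
    (A : Matrix (Fin J) (Fin (I n)) ℝ) {m : Fin N} (hmn : m ≠ n) :
    ∃ B : Matrix ((m' : {m' // m' ≠ m}) → Fin (I m'))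
        ((m' : {m' // m' ≠ m}) → Fin (update I n J m')) ℝ,
      modeUnfold (modeMul X n A) m =
      (modeUnfold X m * B).submatrix (Fin.cast (update_of_ne hmn J I)) id := by
  let insertAt (j : (m' : {m' // m' ≠ m}) → Fin (update I n J m')) (t : Fin (I n))
      (m' : {m' // m' ≠ m}) : Fin (I m') :=
    if h : m'.1 = n then Fin.cast (congrArg I h.symm) t
    else Fin.cast (update_of_ne h J I) (j m')
  -- column `j` of `(X ×ₙ A)₍ₘ₎` is `∑ t, A (j n) t • X₍ₘ₎ᵀ (insertAt j t)`
  refine ⟨of fun k j => ∑ t, if k = insertAt j t then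
    A (Fin.cast (update_self n J I) (j ⟨n, Ne.symm hmn⟩)) t else 0, ext fun q j => ?_⟩
  rw [modeUnfold_apply]
  simp only [modeMul_apply, submatrix_apply, mul_apply, of_apply, Finset.mul_sum, mul_ite,
    mul_zero]
  rw [Finset.sum_comm]
  simp only [Finset.sum_ite_eq', Finset.mem_univ, if_true]
  rw [dif_neg (Ne.symm hmn)]
  refine Finset.sum_congr rfl fun t _ => ?_
  rw [mul_comm, modeUnfold_apply, modeUnfold_apply]
  congr 2
  funext m'
  by_cases h : m' = m
  · subst h
    simp [hmn]
  · by_cases h' : m' = n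
    · subst h'
      simp [h, insertAt]
    · simp [h, h', insertAt]

theorem rank_modeUnfold_modeMul_le (X : Tensor N I) (n : Fin N) {J : ℕ}
    (A : Matrix (Fin J) (Fin (I n)) ℝ) (m : Fin N) :
    (modeUnfold (modeMul X n A) m).rank ≤ (modeUnfold X m).rank := by
  by_cases hmn : m = n
  · subst hmn
    rw [modeUnfold_modeMul_self]
    exact (rank_submatrix_le _ _ _).trans (rank_mul_le_right _ _)
  · obtain ⟨B, hB⟩ := exists_modeUnfold_modeMul_eq_mul X n A hmn
    rw [hB]
    exact (rank_submatrix_le _ _ _).trans (rank_mul_le_left _ _)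

theorem rank_modeUnfold_eq_of_cast {I' : Fin N → ℕ} (h : I = I') {X : Tensor N I}
    {X' : Tensor N I'} (hX : ∀ i, X i = X' fun m => Fin.cast (congrFun h m) (i m)) (m : Fin N) :
    (modeUnfold X m).rank = (modeUnfold X' m).rank := by
  subst h
  obtain rfl : X = X' := funext hX
  rfl

theorem rank_modeUnfold_le_modeMul_of_mul_mul_eq (X : Tensor N I) (n : Fin N) {J : ℕ}
    (A : Matrix (Fin J) (Fin (I n)) ℝ) (C : Matrix (Fin (I n)) (Fin J) ℝ)
    (hC : C * A * modeUnfold X n = modeUnfold X n) (m : Fin N) :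
    (modeUnfold X m).rank ≤ (modeUnfold (modeMul X n A) m).rank := by
  -- `Fin J` and `Fin (update I n J n)` are only propositionally equal
  let C' : Matrix (Fin (I n)) (Fin (update I n J n)) ℝ :=
    C.submatrix id (Fin.cast (update_self n J I))
  have hX : ∀ i, X i = (C * (A * modeUnfold X n)) (i n) fun m => i m := by
    intro i
    rw [← Matrix.mul_assoc, hC, modeUnfold_apply]
    congr 1
    funext m
    split_ifs with h
    · subst h; rfl
    · rfl
  calc (modeUnfold X m).rank = (modeUnfold (modeMul (modeMul X n A) n C') m).rank := by
        refine rank_modeUnfold_eq_of_cast (by simp) (fun i => ?_) m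
        rw [hX, modeMul_apply, mul_apply, mul_apply,
          ← (finCongr (update_self n J I).symm).sum_comp]
        refine Finset.sum_congr rfl fun s _ => ?_
        rw [modeUnfold_apply, modeMul_apply, dif_pos rfl]
        exact congrArg (fun k => C (i n) s * (A * modeUnfold X n) s k)
          (funext fun m' => by rw [dif_neg m'.2]; rfl)
    _ ≤ _ := rank_modeUnfold_modeMul_le _ _ _ _

def selectIndex (n : Fin N) {R : ℕ} (f : Fin R → Fin (I n)) (m : Fin N)
    (i : Fin (update I n R m)) : Fin (I m) :=
  if h : m = n then Fin.cast (congrArg I h.symm) (f (Fin.cast (by rw [h, update_self]) i))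
  else Fin.cast (update_of_ne h R I) i

theorem strictMono_selectIndex {n : Fin N} {R : ℕ} {f : Fin R → Fin (I n)} (hf : StrictMono f)
    (m : Fin N) : StrictMono (selectIndex n f m) := by
  by_cases h : m = n
  · subst h
    intro a b hab
    simpa [selectIndex] using hf hab
  · intro a b hab
    simpa [selectIndex, h] using hab

theorem modeMul_selection_apply (X : Tensor N I) (n : Fin N) {R : ℕ} (f : Fin R → Fin (I n))
    (i : (m : Fin N) → Fin (update I n R m)) :
    modeMul X n (of fun s t => if t = f s then (1 : ℝ) else 0) i =
      X fun m => selectIndex n f m (i m) := by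
  rw [modeMul_apply, of_ite_eq_one_mul, submatrix_apply, modeUnfold_apply]
  congr 1
  funext m
  by_cases h : m = n
  · subst h
    simp [selectIndex]
  · simp [selectIndex, h]

end ModeProduct

theorem modeMul_selection_preserves_unfolding_ranks_general
    (N : ℕ) (I : Fin N → ℕ) (X : Tensor N I) (n : Fin N) (R : ℕ)
    (hR : R = (modeUnfold X n).rank) (f : Fin R → Fin (I n))
    (hf : StrictMono f)
    (hind : LinearIndependent ℝ (fun s : Fin R => modeUnfold X n (f s))) :
    IsSubtensor
        (modeMul X n (Matrix.of fun s t => if t = f s then (1 : ℝ) else 0)) X ∧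
      ∀ m : Fin N,
        (modeUnfold
            (modeMul X n (Matrix.of fun s t => if t = f s then (1 : ℝ) else 0))
            m).rank = (modeUnfold X m).rank := by
  obtain ⟨C, hC⟩ := (modeUnfold X n).exists_mul_submatrix_eq_of_linearIndependent f hind
    (by rw [Fintype.card_fin, hR])
  refine ⟨⟨selectIndex n f, strictMono_selectIndex hf, modeMul_selection_apply X n f⟩,
    fun m => (rank_modeUnfold_modeMul_le X n _ m).antisymm
      (rank_modeUnfold_le_modeMul_of_mul_mul_eq X n _ C ?_ m)⟩
  rw [Matrix.mul_assoc, Matrix.of_ite_eq_one_mul, hC]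

/-- Selecting `R = rank X₍ₙ₎` linearly independent rows of the mode-`n`
unfolding via a 0-1 selection matrix `A` yields a subtensor `Y = X ×ₙ A` of `X`
all of whose unfolding ranks agree with those of `X`. -/
theorem modeMul_selection_preserves_unfolding_ranks
    (N : ℕ) (I : Fin N → ℕ) (X : Tensor N I) (hX : X ≠ 0) (n : Fin N) (R : ℕ)
    (hR : R = (modeUnfold X n).rank) (f : Fin R → Fin (I n))
    (hf : StrictMono f)
    (hind : LinearIndependent ℝ (fun s : Fin R => modeUnfold X n (f s))) :
    IsSubtensor
        (modeMul X n (Matrix.of fun s t => if t = f s then (1 : ℝ) else 0)) X ∧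
      ∀ m : Fin N,
        (modeUnfold
            (modeMul X n (Matrix.of fun s t => if t = f s then (1 : ℝ) else 0))
            m).rank = (modeUnfold X m).rank :=
  modeMul_selection_preserves_unfolding_ranks_general N I X n R hR f hf hind
end

section
/- Let X ∈ ℝ^{I₁×⋯×I_N} be a nonzero tensor and set R_n = rank(X_(n)) for each n. Then X has a subtensor Y ∈ ℝ^{R₁×⋯×R_N} with rank(Y_(n)) = R_n for all 1 ≤ n ≤ N. -/
open scoped BigOperators

/-!
In each mode `n` choose `Rₙ` row indices `eₙ` of the unfolding `X₍ₙ₎` whose rows span its row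
space, and let `Y` be the subtensor of `X` on these index sets. Then `Y₍ₙ₎` is the submatrix of
`X₍ₙ₎` on the rows `eₙ` and on the columns whose remaining indices all lie in the selected sets.
The kept rows span the row space by choice. The kept columns span the column space: the choice of
`eₘ` writes every mode-`m` slice of `X` as a combination of the selected ones, so for `m ≠ n` every
mode-`n` fiber is a combination of fibers whose `m`-th index is selected, and this can be done one
mode at a time. A submatrix on a spanning set of rows and a spanning set of columns has the rank
of the whole matrix.
-/

open Submodule

namespace Matrix

variable {K : Type*} [Field K] {l m n o : Type*}

theorem rank_submatrix_of_span_col_eq [Fintype n] [Fintype o] (A : Matrix m n K) (r : l → m)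
    {c : o → n} (hc : span K (Set.range (A.col ∘ c)) = span K (Set.range A.col)) :
    (A.submatrix r c).rank = (A.submatrix r id).rank := by
  have hcol : Set.range (A.submatrix r c).col =
      LinearMap.funLeft K K r '' Set.range (A.col ∘ c) := by
    rw [← Set.range_comp]; rfl
  have hid : Set.range (A.submatrix r id).col = LinearMap.funLeft K K r '' Set.range A.col := by
    rw [← Set.range_comp]; rfl
  rw [rank_eq_finrank_span_cols, rank_eq_finrank_span_cols, hcol, hid, ← map_span, ← map_span, hc]

theorem rank_submatrix_of_span_row_eq [Fintype n] [Finite l] [Finite m] (A : Matrix m n K)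
    {r : l → m} (hr : span K (Set.range (A.row ∘ r)) = span K (Set.range A.row)) :
    (A.submatrix r id).rank = A.rank := by
  rw [rank_eq_finrank_span_row, rank_eq_finrank_span_row, ← hr]
  rfl

theorem exists_strictMono_span_row_eq {k : ℕ} [Fintype n] (A : Matrix (Fin k) n K) :
    ∃ e : Fin A.rank → Fin k, StrictMono e ∧
      span K (Set.range (A.row ∘ e)) = span K (Set.range A.row) := by
  obtain ⟨κ, a, ha, hspan, hli⟩ := exists_linearIndependent' K A.row
  have : Fintype κ := Fintype.ofInjective a ha
  let S : Finset (Fin k) := Finset.univ.map ⟨a, ha⟩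
  have hS : S.card = A.rank := by
    rw [Finset.card_map, Finset.card_univ, rank_eq_finrank_span_row, ← hspan,
      finrank_span_eq_card hli]
  refine ⟨S.orderEmbOfFin hS, (S.orderEmbOfFin hS).strictMono, ?_⟩
  rw [← hspan, Set.range_comp, Set.range_comp, Finset.range_orderEmbOfFin]
  simp [S]

end Matrix

namespace Tensor

variable {N : ℕ} {I : Fin N → ℕ}

def unfoldIndex (n : Fin N) (p : Fin (I n)) (k : (m : {m : Fin N // m ≠ n}) → Fin (I m.1)) :
    (m : Fin N) → Fin (I m) :=
  fun m => if h : m = n then Fin.cast (congrArg I h.symm) p else k ⟨m, h⟩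

theorem modeUnfold_apply (X : Tensor N I) (n : Fin N) (p : Fin (I n))
    (k : (m : {m : Fin N // m ≠ n}) → Fin (I m.1)) :
    modeUnfold X n p k = X (unfoldIndex n p k) := rfl

theorem unfoldIndex_restrict (i : (m : Fin N) → Fin (I m)) (n : Fin N) (p : Fin (I n)) :
    unfoldIndex n p (fun m => i m.1) = Function.update i n p := by
  funext m
  by_cases h : m = n
  · subst h; simp [unfoldIndex]
  · simp [unfoldIndex, h]

theorem unfoldIndex_val {n : Fin N} (p : Fin (I n))
    (k : (m : {m : Fin N // m ≠ n}) → Fin (I m.1)) (m : {m : Fin N // m ≠ n}) :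
    unfoldIndex n p k m.1 = k m :=
  dif_neg m.2

theorem update_unfoldIndex {n : Fin N} (p : Fin (I n))
    (k : (m : {m : Fin N // m ≠ n}) → Fin (I m.1)) (m : {m : Fin N // m ≠ n}) (x : Fin (I m.1)) :
    Function.update (unfoldIndex n p k) m.1 x = unfoldIndex n p (Function.update k m x) := by
  funext m'
  by_cases h : m' = n
  · subst h; simp [unfoldIndex, Ne.symm m.2]
  · obtain ⟨m, hm⟩ := m
    by_cases h' : m' = m
    · subst h'; simp [unfoldIndex, h]
    · simp [unfoldIndex, h, h']

def reindexCols {J : Fin N → ℕ} (f : (m : Fin N) → Fin (J m) → Fin (I m)) (n : Fin N)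
    (k : (m : {m : Fin N // m ≠ n}) → Fin (J m.1)) : (m : {m : Fin N // m ≠ n}) → Fin (I m.1) :=
  fun m => f m.1 (k m)

theorem modeUnfold_comp (X : Tensor N I) {J : Fin N → ℕ}
    (f : (m : Fin N) → Fin (J m) → Fin (I m)) (n : Fin N) :
    modeUnfold (fun i => X fun m => f m (i m)) n =
      (modeUnfold X n).submatrix (f n) (reindexCols f n) := by
  ext p k
  simp only [modeUnfold, Matrix.of_apply, Matrix.submatrix_apply]
  congr 1
  funext m
  by_cases h : m = n
  · subst h; simp
  · simp [h, reindexCols]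

theorem exists_eq_sum_update_of_span_row_eq (X : Tensor N I) (m : Fin N) {R : ℕ}
    (e : Fin R → Fin (I m))
    (he : span ℝ (Set.range ((modeUnfold X m).row ∘ e)) =
      span ℝ (Set.range (modeUnfold X m).row)) :
    ∃ c : Fin (I m) → Fin R → ℝ, ∀ i, X i = ∑ r, c (i m) r * X (Function.update i m (e r)) := by
  have hmem (p : Fin (I m)) :
      (modeUnfold X m).row p ∈ span ℝ (Set.range ((modeUnfold X m).row ∘ e)) :=
    he ▸ subset_span ⟨p, rfl⟩
  choose c hc using fun p => (mem_span_range_iff_exists_fun ℝ).mp (hmem p)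
  refine ⟨c, fun i => ?_⟩
  have := congrFun (hc (i m)) (fun m' => i m'.1)
  simp only [Finset.sum_apply, Pi.smul_apply, smul_eq_mul, Function.comp_apply,
    Matrix.row_apply, modeUnfold_apply, unfoldIndex_restrict, Function.update_eq_self] at this
  exact this.symm

theorem modeUnfold_col_eq_sum (X : Tensor N I) {n : Fin N} (m : {m : Fin N // m ≠ n}) {R : ℕ}
    (e : Fin R → Fin (I m.1)) (c : Fin (I m.1) → Fin R → ℝ)
    (hc : ∀ i, X i = ∑ r, c (i m.1) r * X (Function.update i m.1 (e r)))
    (k : (m : {m : Fin N // m ≠ n}) → Fin (I m.1)) :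
    (modeUnfold X n).col k =
      ∑ r, c (k m) r • (modeUnfold X n).col (Function.update k m (e r)) := by
  funext p
  simp only [Matrix.col_apply, modeUnfold_apply, Finset.sum_apply, Pi.smul_apply, smul_eq_mul]
  rw [hc, unfoldIndex_val]
  simp only [update_unfoldIndex]

theorem span_col_comp_reindexCols_eq (X : Tensor N I) (n : Fin N) {R : Fin N → ℕ}
    (e : (m : Fin N) → Fin (R m) → Fin (I m))
    (he : ∀ m, m ≠ n → span ℝ (Set.range ((modeUnfold X m).row ∘ e m)) =
      span ℝ (Set.range (modeUnfold X m).row)) :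
    span ℝ (Set.range ((modeUnfold X n).col ∘ reindexCols e n)) =
      span ℝ (Set.range (modeUnfold X n).col) := by
  set V := span ℝ (Set.range ((modeUnfold X n).col ∘ reindexCols e n))
  choose c hc using fun m : {m // m ≠ n} =>
    exists_eq_sum_update_of_span_row_eq X m.1 (e m.1) (he m.1 m.2)
  -- `T` is the set of modes in which `k` is unrestricted; enlarging it costs one slice expansion.
  have key (T : Finset {m : Fin N // m ≠ n}) (k : (m : {m : Fin N // m ≠ n}) → Fin (I m.1))
      (hk : ∀ m ∉ T, k m ∈ Set.range (e m.1)) : (modeUnfold X n).col k ∈ V := by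
    induction T using Finset.induction_on generalizing k with
    | empty =>
      choose r hr using fun m => hk m (Finset.notMem_empty m)
      exact subset_span ⟨r, congrArg (modeUnfold X n).col (funext hr)⟩
    | insert m T _ ih =>
      rw [modeUnfold_col_eq_sum X m (e m.1) (c m) (hc m)]
      refine sum_mem fun r _ => smul_mem _ _ (ih _ fun m' hm' => ?_)
      by_cases h : m' = m
      · subst h; exact ⟨r, by rw [Function.update_self]⟩
      · rw [Function.update_of_ne h]
        exact hk m' (by simp [h, hm'])
  refine le_antisymm (span_mono (Set.range_comp_subset_range _ _)) (span_le.mpr ?_)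
  rintro _ ⟨k, rfl⟩
  exact key Finset.univ k (by simp)

end Tensor

theorem exists_subtensor_multilinear_rank_general
    (N : ℕ) (I : Fin N → ℕ) (X : Tensor N I) :
    ∃ Y : Tensor N (fun n => (modeUnfold X n).rank),
      IsSubtensor Y X ∧ ∀ n : Fin N, (modeUnfold Y n).rank = (modeUnfold X n).rank := by
  choose e he hspan using fun n => Matrix.exists_strictMono_span_row_eq (modeUnfold X n)
  refine ⟨fun i => X fun n => e n (i n), ⟨e, he, fun _ => rfl⟩, fun n => ?_⟩
  have hcols := Tensor.span_col_comp_reindexCols_eq X n e fun m _ => hspan m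
  rw [Tensor.modeUnfold_comp, Matrix.rank_submatrix_of_span_col_eq _ _ hcols]
  exact Matrix.rank_submatrix_of_span_row_eq _ (hspan n)

/-- Any nonzero tensor `X` has a subtensor of shape `R₁ × ⋯ × R_N`, where
`Rₙ = rank X₍ₙ₎`, with the same unfolding ranks as `X`. -/
theorem exists_subtensor_multilinear_rank
    (N : ℕ) (I : Fin N → ℕ) (X : Tensor N I) (hX : X ≠ 0) :
    ∃ Y : Tensor N (fun n => (modeUnfold X n).rank),
      IsSubtensor Y X ∧ ∀ n : Fin N, (modeUnfold Y n).rank = (modeUnfold X n).rank :=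
  exists_subtensor_multilinear_rank_general N I X
end

section
/- Every tensor rank function is a QZC rank function: axioms (TR1)–(TR6) imply axioms (QZC1)–(QZC6). -/
open scoped BigOperators

/-- The axioms (TR1)–(TR6) for a tensor rank function. -/
structure IsTensorRankFn (r : RankFun) : Prop where
  one_iff : ∀ (N : ℕ), 0 < N → ∀ (I : Fin N → ℕ) (X : Tensor N I),
    r N I X = 1 ↔ IsRankOne X
  id_eq : ∀ (M N : ℕ), 2 ≤ N → r N (fun _ => M) (idTensor M N) = M
  matrix_eq : ∀ (I : Fin 2 → ℕ) (X : Tensor 2 I),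
    r 2 I X = (assocMatrix (le_refl 2)
      (fun n hn => absurd n.isLt (Nat.not_lt.mpr hn)) X).rank
  snoc_eq : ∀ (N : ℕ), 0 < N → ∀ (I : Fin N → ℕ) (X : Tensor N I),
    r (N + 1) (Fin.snoc I 1) (snocOne X) = r N I X
  perm_eq : ∀ (N : ℕ), 0 < N → ∀ (I : Fin N → ℕ) (π : Equiv.Perm (Fin N))
    (X : Tensor N I), r N (fun m => I (π m)) (permute I π X) = r N I X
  modeMul_le : ∀ (N : ℕ), 0 < N → ∀ (I : Fin N → ℕ) (X : Tensor N I) (n : Fin N)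
    (J : ℕ) (A : Matrix (Fin J) (Fin (I n)) ℝ),
    r N (Function.update I n J) (modeMul X n A) ≤ r N I X

/-!
Reindexing a tensor along maps `Fin (K n) → Fin (I n)` in every mode is a sequence of mode
products with `0/1` selection matrices, one mode at a time, so by (TR6) it cannot raise the rank;
this covers subtensors (QZC6), and `α • X` is likewise a mode product with a multiple of the
identity (QZC4). A nonzero entry of `X` is a nonzero `1 × ⋯ × 1` subtensor, which is rank one,
so `r X ≠ 0` for `X ≠ 0`. Conversely the zero tensor is a reindexing of `0 • 1` in a shape with
all sizes positive, so its rank is at most `r 1 = 1`, and it is not `1` because zero is not rank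
one. Finally (QZC3) follows from the order-two case (TR3) by stripping the trailing singleton
modes one at a time with (TR4).
-/

open Function

namespace Tensor

variable {N : ℕ}

section comap

variable {I K L : Fin N → ℕ}

def comap (g : ∀ n, Fin (K n) → Fin (I n)) (X : Tensor N I) : Tensor N K :=
  fun i => X fun n => g n (i n)

theorem comap_comap (g : ∀ n, Fin (K n) → Fin (I n)) (f : ∀ n, Fin (L n) → Fin (K n))
    (X : Tensor N I) : comap f (comap g X) = comap (fun n => g n ∘ f n) X :=
  rfl

/-- Stated on values, since the sizes `K n` and `I n` are only propositionally equal. -/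
def IsIdOn (g : ∀ n, Fin (K n) → Fin (I n)) (s : Set (Fin N)) : Prop :=
  ∀ n ∈ s, K n = I n ∧ ∀ j, (g n j : ℕ) = j

theorem isIdOn_cast (h : ∀ n, K n = I n) (s : Set (Fin N)) :
    IsIdOn (fun n => Fin.cast (h n)) s :=
  fun n _ => ⟨h n, fun _ => rfl⟩

end comap

theorem not_isRankOne_zero {I : Fin N → ℕ} : ¬ IsRankOne (0 : Tensor N I) := by
  rintro ⟨a, ha, h⟩
  choose i hi using fun n => Function.ne_iff.mp (ha n)
  exact Finset.prod_ne_zero_iff.mpr (fun n _ => hi n) (h i).symm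

theorem isRankOne_one {I : Fin N → ℕ} (hI : ∀ n, 0 < I n) : IsRankOne (1 : Tensor N I) :=
  ⟨fun _ _ => 1, fun n h => one_ne_zero (congrFun h ⟨0, hI n⟩), fun _ => by simp⟩

section dropLast

variable {I : Fin (N + 1) → ℕ}

def dropLast (h : I (Fin.last N) = 1) (X : Tensor (N + 1) I) : Tensor N fun m => I m.castSucc :=
  fun i => X (Fin.snoc (α := fun m => Fin (I m)) i (Fin.cast h.symm 0))

theorem snoc_init_eq_self (h : I (Fin.last N) = 1) :
    (Fin.snoc (fun m => I m.castSucc) 1 : Fin (N + 1) → ℕ) = I := by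
  funext m
  cases m using Fin.lastCases <;> simp [h]

theorem snocOne_dropLast (h : I (Fin.last N) = 1) (X : Tensor (N + 1) I) :
    snocOne (dropLast h X) = comap (fun m => Fin.cast (congrFun (snoc_init_eq_self h) m)) X := by
  funext i
  simp only [snocOne, dropLast, comap]
  congr 1
  funext m
  cases m using Fin.lastCases with
  | last =>
    have := (i (Fin.last N)).isLt
    simp only [Fin.snoc_last] at this ⊢
    ext
    simp only [Fin.val_cast, Fin.val_zero]
    omega
  | cast m => simp [Fin.snoc_castSucc]

theorem assocMatrix_dropLast (h2 : 2 ≤ N) (h1 : ∀ n : Fin (N + 1), 2 ≤ n.val → I n = 1)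
    (X : Tensor (N + 1) I) :
    assocMatrix h2 (fun n hn => h1 n.castSucc hn) (dropLast (h1 (Fin.last N) h2) X) =
      assocMatrix (by omega) h1 X := by
  ext p q
  simp only [assocMatrix, dropLast, Matrix.of_apply]
  congr 1
  funext m
  cases m using Fin.lastCases with
  | last =>
    rw [Fin.snoc_last, dif_neg (by simp [Fin.ext_iff]; omega),
      dif_neg (by simp [Fin.ext_iff]; omega)]
  | cast m => simp only [Fin.snoc_castSucc, Fin.ext_iff, Fin.val_castSucc]

end dropLast

end Tensor

open Tensor

theorem RankFun.apply_comap_of_isIdOn_univ (r : RankFun) {N : ℕ} {I K : Fin N → ℕ}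
    {g : ∀ n, Fin (K n) → Fin (I n)} (hg : IsIdOn g Set.univ) (X : Tensor N I) :
    r N K (comap g X) = r N I X := by
  obtain rfl : K = I := funext fun n => (hg n trivial).1
  obtain rfl : g = fun _ => id := funext fun n => funext fun j => Fin.ext ((hg n trivial).2 j)
  rfl

namespace IsTensorRankFn

variable {r : RankFun} {N : ℕ} {I J K : Fin N → ℕ}

theorem rank_smul_comap_le (hr : IsTensorRankFn r) (hN : 0 < N) (n : Fin N)
    {g : ∀ m, Fin (K m) → Fin (I m)} (hg : IsIdOn g {n}ᶜ) (α : ℝ) (X : Tensor N I) :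
    r N K (α • comap g X) ≤ r N I X := by
  have hK : ∀ m, K m = update I n (K n) m := by
    intro m
    by_cases h : m = n
    · subst h; simp
    · rw [update_of_ne h]; exact (hg m h).1
  let A : Matrix (Fin (K n)) (Fin (I n)) ℝ := Matrix.of fun p t => if t = g n p then α else 0
  have hAX : α • comap g X = comap (fun m => Fin.cast (hK m)) (modeMul X n A) := by
    funext i
    simp only [comap, modeMul, A, Matrix.of_apply, ite_mul, zero_mul, Fin.cast_cast,
      Fin.cast_eq_self, Finset.sum_ite_eq', Finset.mem_univ, if_true, Pi.smul_apply, smul_eq_mul]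
    congr 2
    funext m
    by_cases h : m = n
    · subst h; simp
    · ext; simp [h, (hg m h).2]
  rw [hAX, r.apply_comap_of_isIdOn_univ (isIdOn_cast hK _)]
  exact hr.modeMul_le N hN I X n (K n) A

theorem rank_comap_le (hr : IsTensorRankFn r) (hN : 0 < N) (g : ∀ n, Fin (K n) → Fin (I n))
    (X : Tensor N I) : r N K (comap g X) ≤ r N I X := by
  suffices ∀ k, ∀ (K : Fin N → ℕ) (g : ∀ n, Fin (K n) → Fin (I n)),
      IsIdOn g {n | k ≤ n.val} → r N K (comap g X) ≤ r N I X from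
    this N K g fun n hn => absurd n.isLt (not_lt.mpr hn)
  intro k
  induction k with
  | zero =>
    intro K g hg
    rw [r.apply_comap_of_isIdOn_univ fun n _ => hg n (Nat.zero_le _)]
  | succ k ih =>
    intro K g hg
    by_cases hk : k < N
    swap
    · exact ih K g fun n (hn : k ≤ n.val) => absurd n.isLt (by omega)
    -- Factor `g` through the shape `K'` that agrees with `I` at mode `k` and with `K` elsewhere.
    let n : Fin N := ⟨k, hk⟩
    let K' := update K n (I n)
    let g₁ : ∀ m, Fin (K' m) → Fin (I m) := fun m j =>
      if h : m = n then Fin.cast (by subst h; simp [K']) j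
      else g m (Fin.cast (by simp [K', update_of_ne h]) j)
    let g₂ : ∀ m, Fin (K m) → Fin (K' m) := fun m j =>
      if h : m = n then Fin.cast (by subst h; simp [K']) (g m j)
      else Fin.cast (by simp [K', update_of_ne h]) j
    have hg₁ : IsIdOn g₁ {m | k ≤ m.val} := by
      intro m hm
      by_cases h : m = n
      · subst h; simp [K', g₁]
      · have hm' : k + 1 ≤ m.val := by
          have : m.val ≠ k := fun hv => h (Fin.ext hv)
          change k ≤ m.val at hm
          omega
        simp [K', g₁, h, (hg m hm').1, (hg m hm').2]
    have hg₂ : IsIdOn g₂ {n}ᶜ := fun m (h : m ≠ n) =>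
      ⟨(update_of_ne h _ _).symm, by simp [g₂, h]⟩
    have hfactor : comap g X = (1 : ℝ) • comap g₂ (comap g₁ X) := by
      rw [one_smul, comap_comap]
      congr 1
      funext m j
      by_cases h : m = n
      · subst h; simp [g₁, g₂]
      · simp [g₁, g₂, h]
    rw [hfactor]
    exact (hr.rank_smul_comap_le hN n hg₂ 1 _).trans (ih K' g₁ hg₁)

theorem rank_le_of_isSubtensor (hr : IsTensorRankFn r) (hN : 0 < N) {X : Tensor N I}
    {Y : Tensor N J} (h : IsSubtensor Y X) : r N J Y ≤ r N I X := by
  obtain ⟨f, -, hY⟩ := h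
  obtain rfl : Y = comap f X := funext hY
  exact hr.rank_comap_le hN f X

theorem rank_smul_le (hr : IsTensorRankFn r) (hN : 0 < N) (α : ℝ) (X : Tensor N I) :
    r N I (α • X) ≤ r N I X :=
  hr.rank_smul_comap_le hN ⟨0, hN⟩ (g := fun _ => id) (fun _ _ => ⟨rfl, fun _ => rfl⟩) α X

theorem rank_smul (hr : IsTensorRankFn r) (hN : 0 < N) {α : ℝ} (hα : α ≠ 0) (X : Tensor N I) :
    r N I (α • X) = r N I X := by
  refine le_antisymm (hr.rank_smul_le hN α X) ?_
  simpa [smul_smul, hα] using hr.rank_smul_le hN α⁻¹ (α • X)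

theorem rank_one (hr : IsTensorRankFn r) (hN : 0 < N) (hI : ∀ n, 0 < I n) : r N I 1 = 1 :=
  (hr.one_iff N hN I 1).mpr (isRankOne_one hI)

theorem rank_zero (hr : IsTensorRankFn r) (hN : 0 < N) : r N I 0 = 0 := by
  let g : ∀ n, Fin (I n) → Fin (max (I n) 1) := fun n => Fin.castLE (le_max_left _ _)
  have hzero : (0 : Tensor N I) = comap g ((0 : ℝ) • 1) := by
    funext i; simp [comap]
  have hle : r N I 0 ≤ 1 := calc
    r N I 0 = r N _ (comap g ((0 : ℝ) • 1)) := by rw [← hzero]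
    _ ≤ r N _ ((0 : ℝ) • 1) := hr.rank_comap_le hN g _
    _ ≤ r N _ 1 := hr.rank_smul_le hN 0 1
    _ = 1 := hr.rank_one hN fun _ => lt_max_of_lt_right one_pos
  have hne : r N I 0 ≠ 1 := fun h => not_isRankOne_zero ((hr.one_iff N hN I 0).mp h)
  omega

theorem rank_eq_zero_iff (hr : IsTensorRankFn r) (hN : 0 < N) (X : Tensor N I) :
    r N I X = 0 ↔ X = 0 := by
  refine ⟨fun h => ?_, fun h => h ▸ hr.rank_zero hN⟩
  by_contra hX
  obtain ⟨i₀, hi₀⟩ := Function.ne_iff.mp hX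
  let g : ∀ n, Fin 1 → Fin (I n) := fun n _ => i₀ n
  have hentry : comap g X = X i₀ • 1 := by
    funext i; simp [comap, g]
  have := hr.rank_comap_le hN g X
  rw [hentry, hr.rank_smul hN hi₀, hr.rank_one hN fun _ => one_pos] at this
  omega

theorem rank_dropLast (hr : IsTensorRankFn r) (hN : 0 < N) {I : Fin (N + 1) → ℕ}
    (h : I (Fin.last N) = 1) (X : Tensor (N + 1) I) :
    r N _ (dropLast h X) = r (N + 1) I X := by
  rw [← hr.snoc_eq N hN _ (dropLast h X), snocOne_dropLast,
    r.apply_comap_of_isIdOn_univ (isIdOn_cast _ _)]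

theorem rank_eq_rank_assocMatrix (hr : IsTensorRankFn r) (N : ℕ) (h2 : 2 ≤ N) (I : Fin N → ℕ)
    (h1 : ∀ n : Fin N, 2 ≤ n.val → I n = 1) (X : Tensor N I) :
    r N I X = (assocMatrix h2 h1 X).rank := by
  induction N, h2 using Nat.le_induction with
  | base => exact hr.matrix_eq I X
  | succ N h2 ih =>
    rw [← hr.rank_dropLast (by omega) (h1 (Fin.last N) h2), ih _ fun n hn => h1 n.castSucc hn,
      assocMatrix_dropLast]

end IsTensorRankFn

/-- Every tensor rank function (axioms (TR1)–(TR6)) is a QZC rank function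
(axioms (QZC1)–(QZC6)). -/
theorem isQZCRankFn_of_isTensorRankFn (r : RankFun) (hr : IsTensorRankFn r) :
    IsQZCRankFn r :=
  { zero_iff := fun _ hN _ => hr.rank_eq_zero_iff hN
    one_iff := hr.one_iff
    id_eq := hr.id_eq
    matrix_eq := hr.rank_eq_rank_assocMatrix
    smul_eq := fun _ hN _ _ hα => hr.rank_smul hN hα
    perm_eq := hr.perm_eq
    subtensor_le := fun _ hN _ _ _ _ => hr.rank_le_of_isSubtensor hN }
end

section
/- If r is a tensor rank function, D is a diagonal tensor of order N ≥ 2 with exactly D nonzero diagonal entries, then r(D) ≥ D. In particular, a tensor rank function cannot assign to a diagonal tensor a rank smaller than the number of its nonzero diagonal entries. -/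
open scoped BigOperators

/-!
Let `t₀ < ⋯ < t_{D-1}` enumerate the nonzero diagonal positions of `X`. Multiplying every mode
by the selection matrix whose row `d` is the unit vector `e_{t_d}` cuts `X` down to the
`D × ⋯ × D` diagonal tensor with entries `X(t_d, …, t_d)`; one further mode product with
`diag (1 / X(t_d, …, t_d))` turns it into `I_{D,N}`. By (TR6) none of these steps increases
`r`, and `r(I_{D,N}) = D` by (TR2).
-/

open Function

theorem RankFun.congr_shape (r : RankFun) {N : ℕ} {I J : Fin N → ℕ} (h : I = J)
    (X : Tensor N I) (Y : Tensor N J)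
    (hY : ∀ j, Y j = X fun n => Fin.cast (congrFun h n).symm (j n)) :
    r N J Y = r N I X := by
  subst h
  congr
  funext j
  simpa using hY j

def selectionMatrix {J K : ℕ} (σ : Fin J → Fin K) (w : Fin J → ℝ) : Matrix (Fin J) (Fin K) ℝ :=
  Matrix.of fun p t => if σ p = t then w p else 0

theorem modeMul_selectionMatrix_apply {N : ℕ} {I : Fin N → ℕ} (X : Tensor N I) (n : Fin N)
    {J : ℕ} (σ : Fin J → Fin (I n)) (w : Fin J → ℝ) (i : (m : Fin N) → Fin (update I n J m)) :
    modeMul X n (selectionMatrix σ w) i =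
      w (Fin.cast (by simp) (i n)) *
        X (fun m => if h : m = n then Fin.cast (congrArg I h.symm) (σ (Fin.cast (by simp) (i n)))
          else Fin.cast (by rw [update_of_ne h]) (i m)) := by
  unfold modeMul
  rw [Finset.sum_eq_single (σ (Fin.cast (by simp) (i n)))]
  · simp [selectionMatrix]
  · intro t _ ht
    simp [selectionMatrix, Ne.symm ht]
  · simp

namespace IsTensorRankFn

variable {r : RankFun}

theorem rank_scale_slices_le (hr : IsTensorRankFn r) {N : ℕ} {I : Fin N → ℕ} (X : Tensor N I)
    (n : Fin N) (w : Fin (I n) → ℝ) :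
    r N I (fun i => w (i n) * X i) ≤ r N I X := by
  refine (r.congr_shape (update_eq_self n I) _ _ fun i => ?_).trans_le
    (hr.modeMul_le N n.pos I X n (I n) (selectionMatrix id w))
  rw [modeMul_selectionMatrix_apply]
  congr 1
  refine congrArg X (funext fun m => ?_)
  split_ifs with h
  · subst h; rfl
  · rfl

theorem rank_reindex_le (hr : IsTensorRankFn r) {N : ℕ} {I J : Fin N → ℕ} (X : Tensor N I)
    (σ : ∀ n, Fin (J n) → Fin (I n)) :
    r N J (fun j => X fun n => σ n (j n)) ≤ r N I X := by
  -- Reindex the modes one at a time; modes `≥ k` are still the identity.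
  suffices key : ∀ k (I J : Fin N → ℕ) (X : Tensor N I) (σ : ∀ n, Fin (J n) → Fin (I n)),
      (∀ n : Fin N, k ≤ n.val → I n = J n ∧ ∀ j, (σ n j : ℕ) = j) →
      r N J (fun j => X fun n => σ n (j n)) ≤ r N I X from
    key N I J X σ fun n hn => absurd n.isLt (not_lt.2 hn)
  intro k
  induction k with
  | zero =>
    intro I J X σ hσ
    refine (r.congr_shape (funext fun n => (hσ n n.val.zero_le).1) X _ fun j => ?_).le
    exact congrArg X (funext fun n => Fin.ext ((hσ n n.val.zero_le).2 _))
  | succ k ih =>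
    intro I J X σ hσ
    by_cases hk : k < N
    swap
    · exact ih I J X σ fun n hn => hσ n (by omega)
    let m : Fin N := ⟨k, hk⟩
    have hσ'_lt : ∀ n (j : Fin (J n)), (if n = m then (j : ℕ) else σ n j) < update I m (J m) n := by
      intro n j
      by_cases h : n = m
      · subst h; simp
      · simp [h]
    let σ' : ∀ n, Fin (J n) → Fin (update I m (J m) n) := fun n j => ⟨_, hσ'_lt n j⟩
    calc r N J (fun j => X fun n => σ n (j n))
        = r N J (fun j => modeMul X m (selectionMatrix (σ m) 1) fun n => σ' n (j n)) := by
          congr 1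
          funext j
          rw [modeMul_selectionMatrix_apply, Pi.one_apply, one_mul]
          refine congrArg X (funext fun n => ?_)
          split_ifs with h
          · subst h; ext; simp [σ']
          · ext; simp [σ', h]
      _ ≤ r N _ (modeMul X m (selectionMatrix (σ m) 1)) := by
          refine ih _ J _ σ' fun n hn => ?_
          by_cases h : n = m
          · subst h; simp [σ']
          · have hn' : k + 1 ≤ n.val := by
              have : n.val ≠ k := fun hnk => h (Fin.ext hnk)
              omega
            simp [σ', h, hσ n hn']
      _ ≤ r N I X := hr.modeMul_le N m.pos I X m (J m) _

end IsTensorRankFn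

theorem tensorRankFn_diagonal_ge_general (r : RankFun) (hr : IsTensorRankFn r)
    (N : ℕ) (hN : 2 ≤ N) (I : Fin N → ℕ) (X : Tensor N I)
    (hdiag : ∀ i : (n : Fin N) → Fin (I n),
      (∃ n m : Fin N, (i n : ℕ) ≠ (i m : ℕ)) → X i = 0)
    (D : ℕ) (T : Finset ℕ) (hcard : T.card = D)
    (hlt : ∀ t ∈ T, ∀ n : Fin N, t < I n)
    (hnz : ∀ t, ∀ ht : t ∈ T, X (fun n => ⟨t, hlt t ht n⟩) ≠ 0) :
    D ≤ r N I X := by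
  let e := T.orderEmbOfFin hcard
  have he : ∀ d, e d ∈ T := T.orderEmbOfFin_mem hcard
  let σ : ∀ n, Fin D → Fin (I n) := fun n d => ⟨e d, hlt _ (he d) n⟩
  let n₀ : Fin N := ⟨0, by omega⟩
  let w : Fin D → ℝ := fun d => (X fun n => σ n d)⁻¹
  have hid : idTensor D N = fun j => w (j n₀) * X fun n => σ n (j n) := by
    funext j
    by_cases hj : ∀ n m, j n = j m
    · have hσj : (fun n => σ n (j n)) = fun n => σ n (j n₀) := funext fun n => by rw [hj n n₀]
      rw [idTensor, if_pos hj, hσj]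
      exact (inv_mul_cancel₀ (hnz _ (he _))).symm
    · obtain ⟨n, m, hnm⟩ : ∃ n m, j n ≠ j m := by simpa using hj
      rw [idTensor, if_neg hj,
        hdiag _ ⟨n, m, fun h => hnm (e.injective h)⟩, mul_zero]
  calc D = r N (fun _ => D) (idTensor D N) := (hr.id_eq D N hN).symm
    _ ≤ r N (fun _ => D) (fun j => X fun n => σ n (j n)) := by
      rw [hid]
      exact hr.rank_scale_slices_le (fun j => X fun n => σ n (j n)) n₀ w
    _ ≤ r N I X := hr.rank_reindex_le X σ

/-- A tensor rank function assigns to a diagonal tensor of order `N ≥ 2` with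
exactly `D` nonzero diagonal entries a rank of at least `D`. -/
theorem tensorRankFn_diagonal_ge (r : RankFun) (hr : IsTensorRankFn r)
    (N : ℕ) (hN : 2 ≤ N) (I : Fin N → ℕ) (X : Tensor N I)
    (hdiag : ∀ i : (n : Fin N) → Fin (I n),
      (∃ n m : Fin N, (i n : ℕ) ≠ (i m : ℕ)) → X i = 0)
    (D : ℕ) (T : Finset ℕ) (hcard : T.card = D)
    (hlt : ∀ t ∈ T, ∀ n : Fin N, t < I n)
    (hnz : ∀ t, ∀ ht : t ∈ T, X (fun n => ⟨t, hlt t ht n⟩) ≠ 0)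
    (hz : ∀ i : (n : Fin N) → Fin (I n), (∀ n m : Fin N, (i n : ℕ) = (i m : ℕ)) →
      (∀ n, (i n : ℕ) ∉ T) → X i = 0) :
    D ≤ r N I X :=
  tensorRankFn_diagonal_ge_general r hr N hN I X hdiag D T hcard hlt hnz
end
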